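/- Let Ω be either ℝ^n or a cube in ℝ^n with sides parallel to the axes. A measurable function f on Ω belongs to 𝓜_{A₁}(Ω) if and only if M_Ω f belongs to 𝓜_{A₁}(Ω). -/

import Mathlib

open MeasureTheory ENNReal Metric Set

/-- A (nondegenerate) cube in `ℝⁿ` with sides parallel to the axes. -/
def IsCube {n : ℕ} (Q : Set (Fin n → ℝ)) : Prop :=
  ∃ (a : Fin n → ℝ) (l : ℝ), 0 < l ∧
    Q = Set.univ.pi fun i => Set.Icc (a i) (a i + l)

/-- The domains considered: all of `ℝⁿ` or a cube with sides parallel to the axes. -/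
def IsAdmissibleDomain {n : ℕ} (Ω : Set (Fin n → ℝ)) : Prop :=
  Ω = Set.univ ∨ IsCube Ω

/-- The Hardy–Littlewood maximal operator restricted to `Ω`:
`M_Ω f (x) = sup { (1/|Q|) ∫_Q |f| : Q ⊆ Ω a cube with x ∈ Q }`. -/
noncomputable def maximal {n : ℕ} (Ω : Set (Fin n → ℝ)) (f : (Fin n → ℝ) → ℝ)
    (x : Fin n → ℝ) : ℝ≥0∞ :=
  ⨆ (Q : Set (Fin n → ℝ)) (_ : IsCube Q) (_ : Q ⊆ Ω) (_ : x ∈ Q),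
    (volume Q)⁻¹ * ∫⁻ y in Q, ENNReal.ofReal |f y|

/-- A weight on `Ω`: a measurable function, positive a.e. on `Ω`, integrable on every
cube contained in `Ω` (hence locally integrable; integrable when `Ω` is itself a cube). -/
structure IsWeight {n : ℕ} (Ω : Set (Fin n → ℝ)) (w : (Fin n → ℝ) → ℝ) : Prop where
  measurable : Measurable w
  pos : ∀ᵐ x ∂(volume.restrict Ω), 0 < w x
  locInt : ∀ Q : Set (Fin n → ℝ), IsCube Q → Q ⊆ Ω → IntegrableOn w Q

/-- The Muckenhoupt `A₁(Ω)` class: `M_Ω w ≤ C w` a.e. on `Ω`. -/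
def MemA1 {n : ℕ} (Ω : Set (Fin n → ℝ)) (w : (Fin n → ℝ) → ℝ) : Prop :=
  IsWeight Ω w ∧ ∃ C : ℝ, ∀ᵐ x ∂(volume.restrict Ω),
    maximal Ω w x ≤ ENNReal.ofReal (C * w x)

/-- The Muckenhoupt `A_p(Ω)` class for `1 < p < ∞`:
`sup_{Q ⊆ Ω} (avg_Q w) * (avg_Q w^(1-p'))^(p-1) < ∞` where `p' = p/(p-1)`. -/
def MemApGT1 {n : ℕ} (Ω : Set (Fin n → ℝ)) (p : ℝ) (w : (Fin n → ℝ) → ℝ) : Prop :=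
  IsWeight Ω w ∧ ∃ C : ℝ≥0∞, C ≠ ∞ ∧ ∀ Q : Set (Fin n → ℝ), IsCube Q → Q ⊆ Ω →
    ((volume Q)⁻¹ * ∫⁻ x in Q, ENNReal.ofReal (w x)) *
      ((volume Q)⁻¹ * ∫⁻ x in Q, ENNReal.ofReal (w x ^ (1 - p / (p - 1)))) ^ (p - 1) ≤ C

/-- The Muckenhoupt `A_p(Ω)` class for `1 ≤ p < ∞`. -/
def MemA {n : ℕ} (Ω : Set (Fin n → ℝ)) (p : ℝ) (w : (Fin n → ℝ) → ℝ) : Prop :=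
  (p = 1 ∧ MemA1 Ω w) ∨ (1 < p ∧ MemApGT1 Ω p w)

/-- The Muckenhoupt `A_∞(Ω)` class: the union of `A_p(Ω)` over `1 ≤ p < ∞`. -/
def MemAInf {n : ℕ} (Ω : Set (Fin n → ℝ)) (w : (Fin n → ℝ) → ℝ) : Prop :=
  ∃ p : ℝ, 1 ≤ p ∧ MemA Ω p w

/-- Membership in the weighted Lebesgue space `L^p_w(Ω)`: `f` measurable with
`∫_Ω |f|^p w < ∞`. -/
def MemLw {n : ℕ} (Ω : Set (Fin n → ℝ)) (p : ℝ) (w f : (Fin n → ℝ) → ℝ) : Prop :=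
  Measurable f ∧
    ∫⁻ x in Ω, ENNReal.ofReal |f x| ^ p * ENNReal.ofReal (w x) < ⊤

/-- Membership in the (unweighted) Lebesgue space `L^p(Ω)`. -/
def MemLeb {n : ℕ} (Ω : Set (Fin n → ℝ)) (p : ℝ) (f : (Fin n → ℝ) → ℝ) : Prop :=
  MemLw Ω p (fun _ => 1) f

/-- `f ∈ 𝓜_{A_p}(Ω)`: `f` is measurable and `|f| ≤ w` a.e. on `Ω` for some `w ∈ A_p(Ω)`. -/
def HasApMajorant {n : ℕ} (Ω : Set (Fin n → ℝ)) (p : ℝ) (f : (Fin n → ℝ) → ℝ) : Prop :=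
  Measurable f ∧ ∃ w, MemA Ω p w ∧ ∀ᵐ x ∂(volume.restrict Ω), |f x| ≤ w x

/-- `f ∈ 𝓜^r_{A_p}(Ω)`: `f` is measurable and `|f|^r ≤ w` a.e. on `Ω` for some
`w ∈ A_p(Ω)`. -/
def HasApPowMajorant {n : ℕ} (Ω : Set (Fin n → ℝ)) (p r : ℝ) (f : (Fin n → ℝ) → ℝ) : Prop :=
  Measurable f ∧ ∃ w, MemA Ω p w ∧ ∀ᵐ x ∂(volume.restrict Ω), |f x| ^ r ≤ w x

/-- `f ∈ 𝓜_{A_∞}(Ω)`: `f` is measurable and `|f| ≤ w` a.e. on `Ω` for some `w ∈ A_∞(Ω)`. -/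
def HasAInfMajorant {n : ℕ} (Ω : Set (Fin n → ℝ)) (f : (Fin n → ℝ) → ℝ) : Prop :=
  Measurable f ∧ ∃ w, MemAInf Ω w ∧ ∀ᵐ x ∂(volume.restrict Ω), |f x| ≤ w x

/-- Membership in weak `L^p(ℝⁿ)`: `sup_{t>0} t · |{|f| > t}|^{1/p} < ∞`. -/
def MemWeakLp {n : ℕ} (p : ℝ) (f : (Fin n → ℝ) → ℝ) : Prop :=
  Measurable f ∧ ∃ C : ℝ≥0∞, C ≠ ⊤ ∧ ∀ t : ℝ, 0 < t →
    ENNReal.ofReal t * volume {x | t < |f x|} ^ (1 / p) ≤ C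

open Metric Set in
lemma isCube_closedBall {n : ℕ} (x : Fin n → ℝ) {r : ℝ} (hr : 0 < r) :
    IsCube (closedBall x r) := by
  refine ⟨fun i => x i - r, 2 * r, by linarith, ?_⟩
  rw [closedBall_pi _ hr.le]
  refine congrArg _ (funext fun i => ?_)
  rw [Real.closedBall_eq_Icc]
  have : x i - r + 2 * r = x i + r := by ring
  rw [this]

lemma IsCube.measurableSet' {n : ℕ} {Q : Set (Fin n → ℝ)} (h : IsCube Q) :
    MeasurableSet Q := by
  obtain ⟨a, l, hl, rfl⟩ := h
  exact MeasurableSet.univ_pi fun i => measurableSet_Icc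

lemma IsCube.volume_eq {n : ℕ} {Q : Set (Fin n → ℝ)} (h : IsCube Q) :
    ∃ l : ℝ, 0 < l ∧ volume Q = ENNReal.ofReal l ^ n := by
  obtain ⟨a, l, hl, rfl⟩ := h
  refine ⟨l, hl, ?_⟩
  rw [volume_pi_pi]
  simp [Real.volume_Icc]

lemma IsCube.volume_pos {n : ℕ} {Q : Set (Fin n → ℝ)} (h : IsCube Q) :
    0 < volume Q := by
  obtain ⟨l, hl, hv⟩ := h.volume_eq
  rw [hv]
  exact ENNReal.pow_pos (ENNReal.ofReal_pos.2 hl) n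

lemma IsCube.volume_ne_top {n : ℕ} {Q : Set (Fin n → ℝ)} (h : IsCube Q) :
    volume Q ≠ ⊤ := by
  obtain ⟨l, hl, hv⟩ := h.volume_eq
  rw [hv]
  exact ENNReal.pow_ne_top ENNReal.ofReal_ne_top

lemma le_maximal {n : ℕ} {Ω Q : Set (Fin n → ℝ)} {f : (Fin n → ℝ) → ℝ} {x : Fin n → ℝ}
    (hQ : IsCube Q) (hQΩ : Q ⊆ Ω) (hx : x ∈ Q) :
    (volume Q)⁻¹ * ∫⁻ y in Q, ENNReal.ofReal |f y| ≤ maximal Ω f x :=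
  le_iSup₂_of_le Q hQ (le_iSup₂_of_le hQΩ hx le_rfl)

lemma maximal_mono {n : ℕ} {Ω : Set (Fin n → ℝ)} {f g : (Fin n → ℝ) → ℝ}
    (h : ∀ᵐ x ∂(volume.restrict Ω), |f x| ≤ |g x|) (x : Fin n → ℝ) :
    maximal Ω f x ≤ maximal Ω g x := by
  refine iSup_mono fun Q => iSup_mono fun hQ => iSup_mono fun hQΩ => iSup_mono fun hx => ?_
  refine mul_le_mul_right (lintegral_mono_ae ?_) _
  filter_upwards [ae_mono (Measure.restrict_mono hQΩ le_rfl) h] with y hy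
  exact ENNReal.ofReal_le_ofReal hy

lemma maximal_const_mul {n : ℕ} {Ω : Set (Fin n → ℝ)} {w : (Fin n → ℝ) → ℝ} {c : ℝ}
    (hc : 0 ≤ c) (x : Fin n → ℝ) :
    maximal Ω (fun y => c * w y) x = ENNReal.ofReal c * maximal Ω w x := by
  unfold maximal
  rw [ENNReal.mul_iSup]
  refine iSup_congr fun Q => ?_
  rw [ENNReal.mul_iSup]
  refine iSup_congr fun hQ => ?_
  rw [ENNReal.mul_iSup]
  refine iSup_congr fun hQΩ => ?_
  rw [ENNReal.mul_iSup]
  refine iSup_congr fun hx => ?_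
  simp_rw [abs_mul, abs_of_nonneg hc, ENNReal.ofReal_mul hc,
    lintegral_const_mul' _ _ ENNReal.ofReal_ne_top]
  ring

lemma ae_interior_le_maximal {n : ℕ} {Ω Q : Set (Fin n → ℝ)} {f : (Fin n → ℝ) → ℝ}
    (hQ : IsCube Q) (hQΩ : Q ⊆ Ω) (hi : IntegrableOn f Q) :
    ∀ᵐ x ∂(volume : Measure (Fin n → ℝ)), x ∈ interior Q →
      ENNReal.ofReal |f x| ≤ maximal Ω f x := by
  set g : (Fin n → ℝ) → ℝ := fun y => |Q.indicator f y| with hg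
  have hgint : Integrable g volume := (hi.integrable_indicator hQ.measurableSet').abs
  have hloc : LocallyIntegrable g volume := hgint.locallyIntegrable
  filter_upwards [(Besicovitch.vitaliFamily (volume : Measure (Fin n → ℝ))).ae_tendsto_average hloc]
    with x hx hxQ
  have hlim : Filter.Tendsto (fun r => ⨍ y in closedBall x r, g y) (nhdsWithin 0 (Set.Ioi 0))
      (nhds (g x)) := hx.comp (Besicovitch.tendsto_filterAt volume x)
  obtain ⟨r0, hr0, hball⟩ : ∃ r0 > 0, closedBall x r0 ⊆ interior Q :=
    (Metric.nhds_basis_closedBall.mem_iff).1 (isOpen_interior.mem_nhds hxQ)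
  have key : ∀ r ∈ Set.Ioc (0 : ℝ) r0,
      ENNReal.ofReal (⨍ y in closedBall x r, g y) ≤ maximal Ω f x := by
    rintro r ⟨hr, hrr0⟩
    have hB : IsCube (closedBall x r) := isCube_closedBall x hr
    have hBQ : closedBall x r ⊆ Q :=
      (closedBall_subset_closedBall hrr0).trans (hball.trans interior_subset)
    have hInt : IntegrableOn (fun y => |f y|) (closedBall x r) volume :=
      (hi.mono_set hBQ).abs
    have havg : ⨍ y in closedBall x r, g y = (volume (closedBall x r)).toReal⁻¹ *
        ∫ y in closedBall x r, |f y| := by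
      rw [setAverage_eq, smul_eq_mul]
      congr 1
      refine setIntegral_congr_fun hB.measurableSet' fun y hy => ?_
      simp [hg, Set.indicator_of_mem (hBQ hy)]
    rw [havg, ENNReal.ofReal_mul (inv_nonneg.2 ENNReal.toReal_nonneg),
      ENNReal.ofReal_inv_of_pos (ENNReal.toReal_pos hB.volume_pos.ne' hB.volume_ne_top),
      ENNReal.ofReal_toReal hB.volume_ne_top,
      ofReal_integral_eq_lintegral_ofReal hInt (Filter.Eventually.of_forall fun y => abs_nonneg _)]
    exact le_maximal hB (hBQ.trans hQΩ) (mem_closedBall_self hr.le)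
  have hlim2 : Filter.Tendsto (fun r => ENNReal.ofReal (⨍ y in closedBall x r, g y))
      (nhdsWithin 0 (Set.Ioi 0)) (nhds (ENNReal.ofReal (g x))) :=
    (ENNReal.continuous_ofReal.tendsto _).comp hlim
  have hfin : ENNReal.ofReal (g x) ≤ maximal Ω f x := by
    refine le_of_tendsto hlim2 ?_
    filter_upwards [Ioc_mem_nhdsGT_of_mem ⟨le_rfl, hr0⟩] with r hr using key r hr
  simpa [hg, Set.indicator_of_mem (interior_subset hxQ)] using hfin

lemma integrableOn_of_maximal_ae_le {n : ℕ} {Ω : Set (Fin n → ℝ)} {f w : (Fin n → ℝ) → ℝ}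
    (hf : Measurable f)
    (hMf : ∀ᵐ x ∂(volume.restrict Ω), maximal Ω f x ≤ ENNReal.ofReal (w x))
    {Q : Set (Fin n → ℝ)} (hQ : IsCube Q) (hQΩ : Q ⊆ Ω) : IntegrableOn f Q := by
  have hmeas := hQ.measurableSet'
  have hs0 : volume.restrict Ω {x | ¬ maximal Ω f x ≤ ENNReal.ofReal (w x)} = 0 :=
    ae_iff.1 hMf
  have hQvol : volume.restrict Ω Q = volume Q := by
    rw [Measure.restrict_apply hmeas, Set.inter_eq_self_of_subset_left hQΩ]
  have hex : ∃ x ∈ Q, maximal Ω f x ≤ ENNReal.ofReal (w x) := by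
    by_contra h
    push_neg at h
    have hQs : Q ⊆ {x | ¬ maximal Ω f x ≤ ENNReal.ofReal (w x)} := fun x hx => not_le.2 (h x hx)
    have hle : volume.restrict Ω Q ≤ volume.restrict Ω
        {x | ¬ maximal Ω f x ≤ ENNReal.ofReal (w x)} := measure_mono hQs
    rw [hQvol, hs0] at hle
    exact absurd (le_antisymm hle zero_le) hQ.volume_pos.ne'
  obtain ⟨x, hxQ, hxle⟩ := hex
  have hlt : (volume Q)⁻¹ * ∫⁻ y in Q, ENNReal.ofReal |f y| < ⊤ :=
    lt_of_le_of_lt (le_trans (le_maximal hQ hQΩ hxQ) hxle) ENNReal.ofReal_lt_top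
  have hfin : ∫⁻ y in Q, ENNReal.ofReal |f y| < ⊤ := by
    by_contra h
    push_neg at h
    rw [top_le_iff] at h
    rw [h, ENNReal.mul_top (ENNReal.inv_ne_zero.2 hQ.volume_ne_top)] at hlt
    exact absurd hlt (lt_irrefl ⊤)
  refine ⟨hf.aestronglyMeasurable, ?_⟩
  rw [hasFiniteIntegral_iff_norm]
  simpa [Real.norm_eq_abs] using hfin

lemma ae_le_maximal_of_integrable {n : ℕ} {Ω : Set (Fin n → ℝ)} (hΩ : IsAdmissibleDomain Ω)
    {f : (Fin n → ℝ) → ℝ}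
    (hi : ∀ Q, IsCube Q → Q ⊆ Ω → IntegrableOn f Q) :
    ∀ᵐ x ∂(volume.restrict Ω), ENNReal.ofReal |f x| ≤ maximal Ω f x := by
  rcases hΩ with rfl | hC
  · have H : ∀ k : ℕ, ∀ᵐ x ∂(volume : Measure (Fin n → ℝ)),
        x ∈ interior (Metric.closedBall (0 : Fin n → ℝ) (k + 1)) →
          ENNReal.ofReal |f x| ≤ maximal Set.univ f x := fun k =>
      ae_interior_le_maximal (isCube_closedBall _ (by positivity)) (Set.subset_univ _)
        (hi _ (isCube_closedBall _ (by positivity)) (Set.subset_univ _))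
    rw [← MeasureTheory.ae_all_iff] at H
    refine ae_restrict_of_ae ?_
    filter_upwards [H] with x hx
    obtain ⟨k, hk⟩ := exists_nat_gt ‖x‖
    refine hx k ?_
    have hxball : x ∈ Metric.ball (0 : Fin n → ℝ) (k + 1) := by
      simpa [Metric.mem_ball, dist_zero_right] using hk.trans_le (by linarith)
    exact Metric.ball_subset_interior_closedBall hxball
  · have h := ae_interior_le_maximal hC (subset_refl Ω) (hi Ω hC (subset_refl Ω))
    have hmem : ∀ᵐ x ∂(volume.restrict Ω), x ∈ interior Ω := by
      rw [ae_iff]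
      rw [Measure.restrict_apply (by
        exact (measurableSet_interior.compl : MeasurableSet {x | ¬ x ∈ interior Ω}))]
      refine le_antisymm ?_ zero_le
      have hsub0 : {a | a ∉ interior Ω} ∩ Ω ⊆ Ω \ interior Ω := fun x hx => ⟨hx.2, hx.1⟩
      refine le_trans (measure_mono hsub0) ?_
      · obtain ⟨a, l, hl, rfl⟩ := hC
        have hio : interior (Set.univ.pi fun i => Set.Icc (a i) (a i + l)) =
            Set.univ.pi fun i => Set.Ioo (a i) (a i + l) := by
          rw [interior_pi_set Set.finite_univ]
          simp [interior_Icc]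
        rw [hio]
        have hsub : (Set.univ.pi fun i => Set.Ioo (a i) (a i + l)) ⊆
            Set.univ.pi fun i => Set.Icc (a i) (a i + l) :=
          Set.pi_mono fun i _ => Set.Ioo_subset_Icc_self
        rw [measure_diff hsub
          (MeasurableSet.univ_pi fun i => measurableSet_Ioo).nullMeasurableSet
          (by rw [volume_pi_pi]; simp [Real.volume_Ioo])]
        rw [volume_pi_pi, volume_pi_pi]
        simp [Real.volume_Icc, Real.volume_Ioo]
    filter_upwards [ae_restrict_of_ae h, hmem] with x h1 h2 using h1 h2

theorem stmt16 (n : ℕ) (Ω : Set (Fin n → ℝ)) (hΩ : IsAdmissibleDomain Ω)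
    (f : (Fin n → ℝ) → ℝ) (hf : Measurable f) :
    HasApMajorant Ω 1 f ↔
      ∃ w, MemA1 Ω w ∧ ∀ᵐ x ∂(volume.restrict Ω),
        maximal Ω f x ≤ ENNReal.ofReal (w x) := by
  constructor
  · rintro ⟨hfm, w, hw, hfw⟩
    have hw1 : MemA1 Ω w := by
      rcases hw with ⟨_, h⟩ | ⟨h, _⟩
      · exact h
      · exact absurd h (lt_irrefl 1)
    obtain ⟨hwW, C, hC⟩ := hw1
    set c := max C 1 with hcdef
    have hc1 : (1 : ℝ) ≤ c := le_max_right _ _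
    have hc0 : (0 : ℝ) ≤ c := by linarith
    have habs : ∀ᵐ x ∂(volume.restrict Ω), |f x| ≤ |w x| := by
      filter_upwards [hfw, hwW.pos] with x h1 h2
      rwa [abs_of_pos h2]
    have hmono := maximal_mono habs
    refine ⟨fun y => c * w y,
      ⟨⟨hwW.measurable.const_mul c, ?_, fun Q h1 h2 => (hwW.locInt Q h1 h2).const_mul c⟩,
        ⟨C, ?_⟩⟩, ?_⟩
    · filter_upwards [hwW.pos] with x hx
      exact mul_pos (by linarith) hx
    · filter_upwards [hC] with x hx
      rw [maximal_const_mul hc0]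
      calc ENNReal.ofReal c * maximal Ω w x
          ≤ ENNReal.ofReal c * ENNReal.ofReal (C * w x) := mul_le_mul_right hx _
        _ = ENNReal.ofReal (C * (c * w x)) := by
            rw [← ENNReal.ofReal_mul hc0]; congr 1; ring
    · filter_upwards [hC, hwW.pos] with x hx hxpos
      refine (hmono x).trans (hx.trans (ENNReal.ofReal_le_ofReal ?_))
      exact mul_le_mul_of_nonneg_right (le_max_left _ _) hxpos.le
  · rintro ⟨w, hw1, hMf⟩
    have hwW := hw1.1
    refine ⟨hf, w, Or.inl ⟨rfl, hw1⟩, ?_⟩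
    have hint : ∀ Q, IsCube Q → Q ⊆ Ω → IntegrableOn f Q := fun Q h1 h2 =>
      integrableOn_of_maximal_ae_le hf hMf h1 h2
    filter_upwards [ae_le_maximal_of_integrable hΩ hint, hMf, hwW.pos] with x h1 h2 h3
    exact (ENNReal.ofReal_le_ofReal_iff h3.le).1 (h1.trans h2)
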